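/- arXiv:2510.27491 — 2 statements merged into one kernel-verified Lean document; each statement's English description precedes it below -/
import Mathlib

section
/- Let u and v be two points in the Poincaré ball B^D, and let θ = π − ∠uOv, where O is the origin. If θ < 1, then d_H(u,O) + d_H(O,v) ≤ d_H(u,v) + θ². -/
/-!
Put `a = d(u, O)` and `b = d(O, v)`. The hyperbolic law of cosines at `O` reads
`cosh d(u, v) = cosh a cosh b + sinh a sinh b cos θ`. Since `1 - cos θ ≤ θ² / 2` and
`2 sinh a sinh b ≤ cosh (a + b) - 1`, the right side is at least
`cosh (a + b) - (cosh (a + b) - 1) θ² / 4`, and for `t = θ² ≤ min 1 (a + b)` this dominates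
`cosh (a + b - t)`: indeed `cosh (a + b) - cosh (a + b - t) = 2 sinh (a + b - t / 2) sinh (t / 2)`,
and `sinh ((a + b) / 2) ^ 2 ≤ 2 sinh (a + b - t / 2)` because `exp (t / 2) ≤ 2`.
-/

noncomputable def arcosh (x : ℝ) : ℝ := Real.log (x + Real.sqrt (x ^ 2 - 1))

/-- Hyperbolic distance in the Poincaré ball model. -/
noncomputable def dH {D : ℕ} (u v : EuclideanSpace ℝ (Fin D)) : ℝ :=
  arcosh (1 + 2 * ‖u - v‖ ^ 2 / ((1 - ‖u‖ ^ 2) * (1 - ‖v‖ ^ 2)))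

namespace Real

lemma cosh_add_sub_cosh_sub (x y : ℝ) :
    cosh (x + y) - cosh (x - y) = 2 * sinh x * sinh y := by
  rw [cosh_add, cosh_sub]; ring

lemma two_mul_sinh_mul_sinh_le (a b : ℝ) : 2 * sinh a * sinh b ≤ cosh (a + b) - 1 := by
  linarith [cosh_add_sub_cosh_sub a b, one_le_cosh (a - b)]

lemma exp_le_two_of_le_half {x : ℝ} (hx : x ≤ 1 / 2) : exp x ≤ 2 :=
  calc exp x ≤ exp (1 / 2) := exp_le_exp.2 hx
    _ ≤ 1 / (1 - 1 / 2) := exp_bound_div_one_sub_of_interval (by norm_num) (by norm_num)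
    _ = 2 := by norm_num

lemma sinh_add_sq_le {p q : ℝ} (hp : 0 ≤ p) (hq : 0 ≤ q) (hq' : q ≤ 1 / 2) :
    sinh (p + q) ^ 2 ≤ 2 * sinh (2 * p + q) := by
  have hsinh_le : sinh (p + q) ≤ 2 * cosh p :=
    calc sinh (p + q) = sinh p * cosh q + cosh p * sinh q := sinh_add p q
      _ ≤ cosh p * cosh q + cosh p * sinh q := by
        gcongr; exact (sinh_lt_cosh p).le
      _ = cosh p * exp q := by rw [← cosh_add_sinh]; ring
      _ ≤ cosh p * 2 := by gcongr; exact exp_le_two_of_le_half hq'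
      _ = 2 * cosh p := mul_comm _ _
  have hmul_le : sinh (p + q) * cosh p ≤ sinh (2 * p + q) := by
    have : 0 ≤ cosh (p + q) * sinh p :=
      mul_nonneg (cosh_pos _).le (sinh_nonneg_iff.2 hp)
    rw [show 2 * p + q = (p + q) + p by ring, sinh_add (p + q) p]
    linarith
  have hpos : 0 ≤ sinh (p + q) := sinh_nonneg_iff.2 (add_nonneg hp hq)
  calc sinh (p + q) ^ 2 = sinh (p + q) * sinh (p + q) := sq _
    _ ≤ sinh (p + q) * (2 * cosh p) := by gcongr
    _ ≤ 2 * sinh (2 * p + q) := by linarith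

lemma cosh_sub_one_mul_le_cosh_sub_cosh_sub {S t : ℝ} (ht : 0 ≤ t) (ht' : t ≤ 1)
    (htS : t ≤ S) :
    (cosh S - 1) * t / 4 ≤ cosh S - cosh (S - t) := by
  have hsinh_sq := sinh_add_sq_le (p := (S - t) / 2) (q := t / 2)
    (by linarith) (by linarith) (by linarith)
  have hsinh_half : t / 2 ≤ sinh (t / 2) := self_le_sinh_iff.2 (by linarith)
  have hsinh_pos : 0 ≤ sinh (S - t / 2) := sinh_nonneg_iff.2 (by linarith)
  have hcosh : cosh S - 1 = 2 * sinh (S / 2) ^ 2 := by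
    conv_lhs => rw [show S = 2 * (S / 2) by ring, cosh_two_mul, cosh_sq]
    ring
  have hdiff := cosh_add_sub_cosh_sub (S - t / 2) (t / 2)
  rw [show S - t / 2 + t / 2 = S by ring, show S - t / 2 - t / 2 = S - t by ring] at hdiff
  rw [show (S - t) / 2 + t / 2 = S / 2 by ring, show 2 * ((S - t) / 2) + t / 2 = S - t / 2 by ring]
    at hsinh_sq
  calc (cosh S - 1) * t / 4 = sinh (S / 2) ^ 2 * (t / 2) := by rw [hcosh]; ring
    _ ≤ 2 * sinh (S - t / 2) * sinh (t / 2) := by gcongr ?_ * ?_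
    _ = cosh S - cosh (S - t) := hdiff.symm

end Real

open Real (cosh sinh cos)

-- The hypothesis is the law of cosines for a hyperbolic triangle with sides `a`, `b` enclosing
-- the angle `π - θ`, opposite to the side `d`.
lemma add_le_add_sq_of_cosh_eq {a b d θ : ℝ} (ha : 0 ≤ a) (hb : 0 ≤ b) (hd : 0 ≤ d)
    (hθ : |θ| ≤ 1) (h : cosh d = cosh a * cosh b + sinh a * sinh b * cos θ) :
    a + b ≤ d + θ ^ 2 := by
  rcases lt_or_ge (a + b) (θ ^ 2) with hsmall | hlarge
  · linarith
  have hθ2 : θ ^ 2 ≤ 1 := (sq_le_one_iff_abs_le_one θ).2 hθ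
  have hsinh : 0 ≤ sinh a * sinh b :=
    mul_nonneg (Real.sinh_nonneg_iff.2 ha) (Real.sinh_nonneg_iff.2 hb)
  have hcos : 1 - θ ^ 2 / 2 ≤ cos θ := Real.one_sub_sq_div_two_le_cos
  have hcosh_le : cosh (a + b - θ ^ 2) ≤ cosh d :=
    calc cosh (a + b - θ ^ 2) ≤ cosh (a + b) - (cosh (a + b) - 1) * θ ^ 2 / 4 := by
          linarith [Real.cosh_sub_one_mul_le_cosh_sub_cosh_sub (sq_nonneg θ) hθ2 hlarge]
      _ ≤ cosh (a + b) - sinh a * sinh b * θ ^ 2 / 2 := by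
          nlinarith [Real.two_mul_sinh_mul_sinh_le a b, sq_nonneg θ]
      _ ≤ cosh d := by
          rw [h, Real.cosh_add]
          nlinarith
  have habs : |a + b - θ ^ 2| ≤ d := abs_of_nonneg hd ▸ Real.cosh_le_cosh.1 hcosh_le
  linarith [le_abs_self (a + b - θ ^ 2)]

section PoincareBall

variable {D : ℕ} {u v : EuclideanSpace ℝ (Fin D)}

lemma one_le_dH_cosh_formula (hu : ‖u‖ < 1) (hv : ‖v‖ < 1) :
    1 ≤ 1 + 2 * ‖u - v‖ ^ 2 / ((1 - ‖u‖ ^ 2) * (1 - ‖v‖ ^ 2)) := by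
  have hu' : 0 < 1 - ‖u‖ ^ 2 := by nlinarith [norm_nonneg u]
  have hv' : 0 < 1 - ‖v‖ ^ 2 := by nlinarith [norm_nonneg v]
  simp only [le_add_iff_nonneg_right]
  positivity

-- `arcosh` is definitionally `Real.arcosh`.
lemma cosh_dH (hu : ‖u‖ < 1) (hv : ‖v‖ < 1) :
    cosh (dH u v) = 1 + 2 * ‖u - v‖ ^ 2 / ((1 - ‖u‖ ^ 2) * (1 - ‖v‖ ^ 2)) :=
  Real.cosh_arcosh (one_le_dH_cosh_formula hu hv)

lemma dH_nonneg (hu : ‖u‖ < 1) (hv : ‖v‖ < 1) : 0 ≤ dH u v :=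
  Real.arcosh_nonneg (one_le_dH_cosh_formula hu hv)

lemma dH_comm (u v : EuclideanSpace ℝ (Fin D)) : dH u v = dH v u := by
  rw [dH, dH, norm_sub_rev, mul_comm (1 - ‖u‖ ^ 2)]

lemma cosh_dH_zero (hu : ‖u‖ < 1) : cosh (dH u 0) = (1 + ‖u‖ ^ 2) / (1 - ‖u‖ ^ 2) := by
  have hu' : 1 - ‖u‖ ^ 2 ≠ 0 := by nlinarith [norm_nonneg u]
  rw [cosh_dH hu (by simp), sub_zero, norm_zero]
  field_simp
  ring

lemma sinh_dH_zero (hu : ‖u‖ < 1) : sinh (dH u 0) = 2 * ‖u‖ / (1 - ‖u‖ ^ 2) := by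
  have hu' : 0 < 1 - ‖u‖ ^ 2 := by nlinarith [norm_nonneg u]
  refine (sq_eq_sq₀ (Real.sinh_nonneg_iff.2 (dH_nonneg hu (by simp))) (by positivity)).1 ?_
  rw [Real.sinh_sq, cosh_dH_zero hu]
  field_simp
  ring

lemma cosh_dH_law_of_cosines (hu : ‖u‖ < 1) (hv : ‖v‖ < 1) :
    cosh (dH u v) = cosh (dH u 0) * cosh (dH 0 v)
      - sinh (dH u 0) * sinh (dH 0 v) * cos (InnerProductGeometry.angle u v) := by
  have hu' : 1 - ‖u‖ ^ 2 ≠ 0 := by nlinarith [norm_nonneg u]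
  have hv' : 1 - ‖v‖ ^ 2 ≠ 0 := by nlinarith [norm_nonneg v]
  rw [dH_comm 0 v, cosh_dH hu hv, cosh_dH_zero hu, cosh_dH_zero hv, sinh_dH_zero hu,
    sinh_dH_zero hv, norm_sub_sq_real, ← InnerProductGeometry.cos_angle_mul_norm_mul_norm]
  field_simp
  ring

end PoincareBall

theorem triangle_defect_angle_bound {D : ℕ} (u v : EuclideanSpace ℝ (Fin D))
    (hu : ‖u‖ < 1) (hv : ‖v‖ < 1) (θ : ℝ)
    (hθdef : θ = Real.pi - InnerProductGeometry.angle u v) (hθ : θ < 1) :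
    dH u 0 + dH 0 v ≤ dH u v + θ ^ 2 := by
  have hθ_nonneg : 0 ≤ θ := by linarith [InnerProductGeometry.angle_le_pi u v]
  have hlaw := cosh_dH_law_of_cosines hu hv
  rw [show InnerProductGeometry.angle u v = Real.pi - θ by linarith, Real.cos_pi_sub] at hlaw
  have h0 : ‖(0 : EuclideanSpace ℝ (Fin D))‖ < 1 := by simp
  exact add_le_add_sq_of_cosh_eq (dH_nonneg hu h0) (dH_nonneg h0 hv) (dH_nonneg hu hv)
    (abs_le.2 ⟨by linarith, hθ.le⟩) (by rw [hlaw]; ring)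
end

section
/- Let ū and v̄ be two points on the boundary sphere of the Poincaré ball such that the hyperbolic geodesic joining them is at Euclidean distance β from the origin, and let φ = π − ∠ūOv̄. Then β = tan(φ/4), and consequently πβ ≤ φ ≤ 4β. -/
open Real InnerProductGeometry Module
open scoped RealInnerProductSpace

/-! The centre `c` of a circle orthogonal to the unit circle through `u` and `v` satisfies
`⟪u, c⟫ = ⟪v, c⟫ = 1`, so in the plane it is a multiple of `u + v`, which gives
`cos ∠uOv = 2 / ‖c‖² - 1`. With `β = ‖c‖ - R = tan ψ` one finds `cos 2ψ = R / ‖c‖`, hence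
`cos 4ψ = 1 - 2 / ‖c‖² = cos φ` and `φ = 4ψ`. The bounds then follow from `arctan β ≤ β` and
the concavity of `arctan` on `[0, 1]`. -/

lemma arctan_le_self {x : ℝ} (hx : 0 ≤ x) : arctan x ≤ x := by
  simpa only [tan_arctan] using le_tan (arctan_nonneg.mpr hx) (arctan_lt_pi_div_two x)

lemma concaveOn_arctan_Ici : ConcaveOn ℝ (Set.Ici 0) arctan := by
  refine AntitoneOn.concaveOn_of_deriv (convex_Ici 0) continuous_arctan.continuousOn
    differentiable_arctan.differentiableOn ?_
  intro x hx y _ hxy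
  rw [interior_Ici, Set.mem_Ioi] at hx
  simp only [Real.deriv_arctan]
  gcongr

lemma pi_div_four_mul_le_arctan {x : ℝ} (h0 : 0 ≤ x) (h1 : x ≤ 1) : π / 4 * x ≤ arctan x := by
  have := concaveOn_arctan_Ici.2 Set.self_mem_Ici (Set.mem_Ici.2 zero_le_one)
    (sub_nonneg.mpr h1) h0 (sub_add_cancel 1 x)
  simpa [arctan_one, mul_comm] using this

lemma cos_two_mul_arctan (x : ℝ) : cos (2 * arctan x) = (1 - x ^ 2) / (1 + x ^ 2) := by
  rw [cos_two_mul, cos_sq_arctan]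
  field_simp
  ring

lemma sub_mem_Icc_of_sq_eq_one_add_sq {N R : ℝ} (hN : 0 ≤ N) (hR : 0 ≤ R)
    (h : N ^ 2 = 1 + R ^ 2) : N - R ∈ Set.Icc 0 1 :=
  ⟨by nlinarith, by nlinarith⟩

lemma eq_four_mul_arctan_of_cos_eq {N R φ : ℝ} (hN : 0 ≤ N) (hR : 0 ≤ R) (h : N ^ 2 = 1 + R ^ 2)
    (hφ : φ ∈ Set.Icc 0 π) (hcos : cos φ = 1 - 2 / N ^ 2) : φ = 4 * arctan (N - R) := by
  have hN1 : 1 ≤ N := by nlinarith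
  have hcos2 : cos (2 * arctan (N - R)) = R / N := by
    rw [cos_two_mul_arctan, div_eq_div_iff (by positivity) (by positivity)]
    linear_combination (R - N) * h
  have hcos4 : cos (4 * arctan (N - R)) = cos φ := by
    rw [show 4 * arctan (N - R) = 2 * (2 * arctan (N - R)) by ring, cos_two_mul, hcos2, hcos]
    field_simp
    linear_combination -2 * h
  have hψ : 4 * arctan (N - R) ∈ Set.Icc 0 π := by
    obtain ⟨hβ0, hβ1⟩ := sub_mem_Icc_of_sq_eq_one_add_sq hN hR h
    constructor
    · linarith [arctan_nonneg.mpr hβ0]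
    · linarith [arctan_one ▸ arctan_strictMono.monotone hβ1]
  exact injOn_cos hφ hψ hcos4.symm

section OrthogonalCircle

variable {V : Type*} [NormedAddCommGroup V] [InnerProductSpace ℝ V] {u v c : V} {R : ℝ}

lemma inner_eq_one_of_norm_sub_eq (hu : ‖u‖ = 1) (huc : ‖u - c‖ = R)
    (horth : ‖c‖ ^ 2 = 1 + R ^ 2) : ⟪u, c⟫ = 1 := by
  have := norm_sub_sq_real u c
  rw [huc, hu, horth] at this
  linarith

lemma cos_angle_eq_of_norm_sub_eq [Fact (finrank ℝ V = 2)] (hu : ‖u‖ = 1) (hv : ‖v‖ = 1)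
    (hne : u ≠ v) (huc : ‖u - c‖ = R) (hvc : ‖v - c‖ = R) (horth : ‖c‖ ^ 2 = 1 + R ^ 2) :
    cos (angle u v) = 2 / ‖c‖ ^ 2 - 1 := by
  have hc : ‖c‖ ^ 2 ≠ 0 := by nlinarith
  have huc' := inner_eq_one_of_norm_sub_eq hu huc horth
  have hvc' := inner_eq_one_of_norm_sub_eq hv hvc horth
  obtain ⟨t, ht⟩ : ∃ t : ℝ, t • c = u + v := by
    refine Submodule.mem_span_singleton.mp
      (Submodule.mem_span_singleton_of_inner_eq_zero_of_inner_eq_zero (sub_ne_zero.mpr hne)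
        (by rintro rfl; simp at hc) ?_ ?_)
    · rw [inner_add_right, inner_sub_left, inner_sub_left, real_inner_self_eq_norm_sq,
        real_inner_self_eq_norm_sq, real_inner_comm u v, hu, hv]
      ring
    · rw [inner_sub_left, huc', hvc', sub_self]
  have htc : t * ‖c‖ ^ 2 = 2 := by
    have := congrArg (⟪·, c⟫) ht
    simp only [real_inner_smul_left, real_inner_self_eq_norm_sq, inner_add_left, huc', hvc'] at this
    linarith
  have huv : 2 + 2 * ⟪u, v⟫ = t ^ 2 * ‖c‖ ^ 2 := by
    have := congrArg (‖·‖ ^ 2) ht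
    simp only [norm_smul, mul_pow, Real.norm_eq_abs, sq_abs, norm_add_sq_real, hu, hv] at this
    linarith
  rw [cos_angle, hu, hv, mul_one, div_one, eq_sub_iff_add_eq, eq_div_iff hc]
  linear_combination ‖c‖ ^ 2 / 2 * huv + (t * ‖c‖ ^ 2 + 2) / 2 * htc

end OrthogonalCircle

theorem boundary_geodesic_angle_general (ubar vbar c : EuclideanSpace ℝ (Fin 2)) (R β φ : ℝ)
    (hub : ‖ubar‖ = 1) (hvb : ‖vbar‖ = 1) (hne : ubar ≠ vbar)
    (huc : ‖ubar - c‖ = R) (hvc : ‖vbar - c‖ = R)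
    (horth : ‖c‖ ^ 2 = 1 + R ^ 2)
    (hβ : β = ‖c‖ - R)
    (hφ : φ = Real.pi - InnerProductGeometry.angle ubar vbar) :
    β = Real.tan (φ / 4) ∧ Real.pi * β ≤ φ ∧ φ ≤ 4 * β := by
  have : Fact (finrank ℝ (EuclideanSpace ℝ (Fin 2)) = 2) := ⟨finrank_euclideanSpace_fin⟩
  have hR : 0 ≤ R := huc ▸ norm_nonneg _
  have hφ_mem : φ ∈ Set.Icc 0 π := by
    constructor <;> linarith [angle_nonneg ubar vbar, angle_le_pi ubar vbar]
  have hcos : cos φ = 1 - 2 / ‖c‖ ^ 2 := by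
    rw [hφ, cos_pi_sub, cos_angle_eq_of_norm_sub_eq hub hvb hne huc hvc horth]
    ring
  have hφ_eq : φ = 4 * arctan β :=
    hβ ▸ eq_four_mul_arctan_of_cos_eq (norm_nonneg c) hR horth hφ_mem hcos
  obtain ⟨hβ0, hβ1⟩ : β ∈ Set.Icc 0 1 :=
    hβ ▸ sub_mem_Icc_of_sq_eq_one_add_sq (norm_nonneg c) hR horth
  refine ⟨by rw [hφ_eq, mul_div_cancel_left₀ _ four_ne_zero, tan_arctan], ?_, ?_⟩
  · linarith [pi_div_four_mul_le_arctan hβ0 hβ1]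
  · linarith [arctan_le_self hβ0]

/-- Two boundary points of the Poincaré disk joined by a circular arc (center `c`,
radius `R`) orthogonal to the unit circle, with `β` the Euclidean distance from the
origin to the arc and `φ = π - ∠ ū O v̄`: then `β = tan (φ/4)`, hence `πβ ≤ φ ≤ 4β`. -/
theorem boundary_geodesic_angle (ubar vbar c : EuclideanSpace ℝ (Fin 2)) (R β φ : ℝ)
    (hub : ‖ubar‖ = 1) (hvb : ‖vbar‖ = 1) (hne : ubar ≠ vbar)
    (hR : 0 < R) (huc : ‖ubar - c‖ = R) (hvc : ‖vbar - c‖ = R)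
    (horth : ‖c‖ ^ 2 = 1 + R ^ 2)
    (hβ : β = ‖c‖ - R)
    (hφ : φ = Real.pi - InnerProductGeometry.angle ubar vbar) :
    β = Real.tan (φ / 4) ∧ Real.pi * β ≤ φ ∧ φ ≤ 4 * β :=
  boundary_geodesic_angle_general ubar vbar c R β φ hub hvb hne huc hvc horth hβ hφ
end
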